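/- Let A : ℝⁿ → Set ℝⁿ be partly smooth at x̄ relative to a manifold M given by a C^p patch through x̄, r-resolvent-regular at x̄ for ū ∈ A(x̄), and assume the strong inclusion (non-degeneracy) condition ū ∈ ri(A(x̄)). Then for every γ ∈ (0, 1/r) there exists ε̄ > 0 such that for every ε ∈ (0, ε̄), the point z̄ = x̄ + γū lies in the topological interior of the local union U_{γ,ε}. -/

import Mathlib

open Filter Topology Set RealInnerProductSpace

noncomputable section

/-- A set-valued operator `A` is upper semicontinuous: whenever `x k → x₀`,
`u k ∈ A (x k)` for all `k`, and `u k → u₀`, then `u₀ ∈ A x₀`. -/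
def UpperSC {E : Type*} [NormedAddCommGroup E] [InnerProductSpace ℝ E]
    (A : E → Set E) : Prop :=
  ∀ (x u : ℕ → E) (x₀ u₀ : E),
    Tendsto x atTop (𝓝 x₀) → (∀ k, u k ∈ A (x k)) → Tendsto u atTop (𝓝 u₀) →
      u₀ ∈ A x₀

/-- `A` is lower semicontinuous along `S` at `x₀ ∈ S`. -/
def LowerSCAlongAt {E : Type*} [NormedAddCommGroup E] [InnerProductSpace ℝ E]
    (A : E → Set E) (S : Set E) (x₀ : E) : Prop :=
  ∀ u₀ ∈ A x₀, ∀ x : ℕ → E, (∀ k, x k ∈ S) → Tendsto x atTop (𝓝 x₀) →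
    ∃ u : ℕ → E, (∀ k, u k ∈ A (x k)) ∧ Tendsto u atTop (𝓝 u₀)

/-- `A` is continuous along `S` near `xbar`: lower semicontinuous along `S` at every
point of `S` in some neighborhood of `xbar`. -/
def ContinuousAlongNear {E : Type*} [NormedAddCommGroup E] [InnerProductSpace ℝ E]
    (A : E → Set E) (S : Set E) (xbar : E) : Prop :=
  ∃ W ∈ 𝓝 xbar, ∀ x ∈ S ∩ W, LowerSCAlongAt A S x

/-- A `C^p` patch (local parametrization) of a manifold `M ⊆ E` through `xbar`,
with parameter domain `F` (playing the role of `ℝ^d`). -/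
structure CpPatch (p : ℕ∞) (F : Type*) [NormedAddCommGroup F] [InnerProductSpace ℝ F]
    {E : Type*} [NormedAddCommGroup E] [InnerProductSpace ℝ E]
    (M : Set E) (xbar : E) where
  V : Set F
  toFun : F → E
  isOpen_V : IsOpen V
  zero_mem : (0 : F) ∈ V
  contDiffOn : ContDiffOn ℝ p toFun V
  injOn : Set.InjOn toFun V
  fderiv_injective : ∀ t ∈ V, Function.Injective (fderiv ℝ toFun t)
  map_zero : toFun 0 = xbar
  image_eq : M = toFun '' V

namespace CpPatch

variable {p : ℕ∞} {F : Type*} [NormedAddCommGroup F] [InnerProductSpace ℝ F]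
  {E : Type*} [NormedAddCommGroup E] [InnerProductSpace ℝ E] {M : Set E} {xbar : E}

/-- The tangent space `T_M(x) = range (Dφ(t))` where `x = φ(t)`, `t ∈ V`. -/
def tangent (P : CpPatch p F M xbar) (x : E) : Submodule ℝ E :=
  haveI : Nonempty F := ⟨0⟩
  LinearMap.range (fderiv ℝ P.toFun (Function.invFunOn P.toFun P.V x) : F →ₗ[ℝ] E)

/-- The normal space `N_M(x) = (T_M(x))ᗮ`. -/
def normal (P : CpPatch p F M xbar) (x : E) : Submodule ℝ E :=
  (P.tangent x)ᗮ

end CpPatch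

/-- `Lin S`: the direction of the affine span of `S`. -/
def Lin {E : Type*} [NormedAddCommGroup E] [InnerProductSpace ℝ E] (S : Set E) :
    Submodule ℝ E :=
  (affineSpan ℝ S).direction

/-- `A` is partly smooth at `xbar` relative to `M` (given by the `C^p` patch `P`). -/
def PartlySmoothAt {p : ℕ∞} {F : Type*} [NormedAddCommGroup F] [InnerProductSpace ℝ F]
    {E : Type*} [NormedAddCommGroup E] [InnerProductSpace ℝ E] [FiniteDimensional ℝ E]
    (A : E → Set E) (M : Set E) (xbar : E) (P : CpPatch p F M xbar) : Prop :=
  UpperSC A ∧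
  -- Regularity
  (∃ W ∈ 𝓝 xbar, ∀ x ∈ W, (A x).Nonempty ∧ IsClosed (A x) ∧ Convex ℝ (A x)) ∧
  -- Sharpness
  P.normal xbar = Lin (A xbar) ∧
  (∃ η : E → E, ∃ W ∈ 𝓝 xbar, ContinuousOn η (M ∩ W) ∧
    ∀ x ∈ M ∩ W,
      (fun v => ((P.tangent x).orthogonalProjectionOnto v : E)) '' A x = {η x}) ∧
  -- Continuity
  ContinuousAlongNear A M xbar

/-- The `ε`-localization of `A` around `(xbar, ubar)`. -/
def Locz {E : Type*} [NormedAddCommGroup E] [InnerProductSpace ℝ E]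
    (A : E → Set E) (xbar ubar : E) (ε : ℝ) (x : E) : Set E :=
  if ‖x - xbar‖ < ε then {u ∈ A x | ‖u - ubar‖ < ε} else ∅

/-- `A` is `r`-resolvent-regular at `xbar` for `ubar`, with constants `r > 0`, `ε > 0`. -/
def ResolventRegular {E : Type*} [NormedAddCommGroup E] [InnerProductSpace ℝ E]
    (A : E → Set E) (xbar ubar : E) (r ε : ℝ) : Prop :=
  0 < r ∧ 0 < ε ∧
  (∀ x y u v : E, u ∈ Locz A xbar ubar ε x → v ∈ Locz A xbar ubar ε y →
    (inner ℝ (x - y) (u - v) : ℝ) ≥ -r * ‖x - y‖ ^ 2) ∧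
  (∀ γ : ℝ, 0 < γ → γ < 1 / r →
    ∃ W ∈ 𝓝 (xbar + γ • ubar), ∃ J : E → E, ContinuousOn J W ∧
      ∀ z ∈ W, ∀ x : E,
        (∃ u ∈ Locz A xbar ubar ε x, z = x + γ • u) ↔ x = J z)

/-- The local union `U_{γ,ε} = ⋃_{x ∈ M, ‖x-x̄‖<ε} (x + γ A_ε(x))`. -/
def LocalUnion {E : Type*} [NormedAddCommGroup E] [InnerProductSpace ℝ E]
    (A : E → Set E) (M : Set E) (xbar ubar : E) (γ ε : ℝ) : Set E :=
  {z | ∃ x ∈ M, ‖x - xbar‖ < ε ∧ ∃ u ∈ Locz A xbar ubar ε x, z = x + γ • u}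

/-!
The heart of the matter is an identification property: near `(x̄, ū)`, every `u ∈ A x` has
`x ∈ M`. Suppose `(xₖ, uₖ) → (x̄, ū)` with `uₖ ∈ A xₖ` and `xₖ ∉ M`. Let `yₖ` be a nearest point
of the patch to `xₖ`, so that `xₖ - yₖ ≠ 0` is normal to `M` at `yₖ`, and pick `aₖ ∈ A yₖ` with
`aₖ → ū` by continuity along `M`. Non-degeneracy and sharpness give `ρ > 0` with `ū + v ∈ A x̄`
for all `v ∈ N_M(x̄)` with `‖v‖ ≤ ρ`. For a fixed `0 < δ < ρ`, eventually `aₖ + wₖ ∈ A yₖ` for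
every normal `wₖ` at `yₖ` of length `≤ δ`: otherwise the unit vectors separating `aₖ + wₖ` from
the closed convex set `A yₖ` (normal, because `A yₖ` projects onto `T_M(yₖ)` as a single point)
accumulate at a unit normal `ψ` at `x̄`, and approximating `ū + ρψ ∈ A x̄` inside `A yₖ` forces
`ρ ≤ δ`. Taking `wₖ` in the direction of
`xₖ - yₖ`, hypomonotonicity for `(xₖ, uₖ)` and `(yₖ, aₖ + wₖ)` gives
`δ ≤ ‖uₖ - aₖ‖ + r ‖xₖ - yₖ‖ → 0`, a contradiction.

The theorem follows: the resolvent `J` is continuous near `z̄ = x̄ + γū` with `J z̄ = x̄`, so for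
`z` near `z̄` the point `(J z, γ⁻¹ (z - J z))` of the graph of `A` is close to `(x̄, ū)`; hence
`J z ∈ M`, and `z = J z + γ · γ⁻¹ (z - J z)` lies in the local union.
-/

theorem IsCompact.tendsto_of_tendsto_comp_of_injOn {X Y : Type*} [TopologicalSpace X]
    [TopologicalSpace Y] [T2Space Y] {K : Set X} (hK : IsCompact K) {f : X → Y}
    (hf : ContinuousOn f K) (hinj : InjOn f K) {u : ℕ → X} (hu : ∀ k, u k ∈ K) {x : X}
    (hx : x ∈ K) (h : Tendsto (fun k => f (u k)) atTop (𝓝 (f x))) :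
    Tendsto u atTop (𝓝 x) := by
  have : CompactSpace K := isCompact_iff_compactSpace.1 hK
  have hemb : IsClosedEmbedding (K.domRestrict f) :=
    hf.domRestrict.isClosedEmbedding hinj.injective
  have hsub : Tendsto (fun k => (⟨u k, hu k⟩ : K)) atTop (𝓝 ⟨x, hx⟩) :=
    hemb.isInducing.tendsto_nhds_iff.2 h
  exact (continuous_subtype_val.tendsto _).comp hsub

section InnerProductSpace

variable {E : Type*} [NormedAddCommGroup E] [InnerProductSpace ℝ E]

theorem exists_forall_mem_of_mem_intrinsicInterior {s : Set E} {u : E}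
    (h : u ∈ intrinsicInterior ℝ s) :
    ∃ ρ > 0, ∀ v, v - u ∈ (affineSpan ℝ s).direction → ‖v - u‖ ≤ ρ → v ∈ s := by
  obtain ⟨u', hu', rfl⟩ := h
  obtain ⟨ρ, hρ, hball⟩ := Metric.isOpen_iff.1 isOpen_interior u' hu'
  refine ⟨ρ / 2, half_pos hρ, fun v hv hvρ => ?_⟩
  have hvspan : v ∈ affineSpan ℝ s := by
    simpa using AffineSubspace.vadd_mem_of_mem_direction hv u'.2
  have : (⟨v, hvspan⟩ : affineSpan ℝ s) ∈ Metric.ball u' ρ := by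
    rw [Metric.mem_ball, Subtype.dist_eq, dist_eq_norm]
    linarith
  exact interior_subset (s := Subtype.val ⁻¹' s) (hball this)

theorem le_norm_sub_add_of_inner_ge {x y u a : E} {r δ : ℝ} (hxy : x ≠ y)
    (h : -r * ‖x - y‖ ^ 2 ≤ ⟪x - y, u - (a + (δ / ‖x - y‖) • (x - y))⟫) :
    δ ≤ ‖u - a‖ + r * ‖x - y‖ := by
  have hD : 0 < ‖x - y‖ := norm_pos_iff.2 (sub_ne_zero.2 hxy)
  have hcs : ⟪x - y, u - a⟫ ≤ ‖x - y‖ * ‖u - a‖ := real_inner_le_norm _ _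
  have hw : ⟪x - y, (δ / ‖x - y‖) • (x - y)⟫ = δ * ‖x - y‖ := by
    rw [real_inner_smul_right, real_inner_self_eq_norm_sq]
    field_simp
  rw [← sub_sub, inner_sub_right, hw] at h
  nlinarith

theorem inner_normalize_sub_le {q p b c : E} (h : ⟪q - p, b - p⟫ ≤ 0) :
    ⟪‖q - p‖⁻¹ • (q - p), b - c⟫ ≤ ‖q - c‖ := by
  have hsplit : ⟪q - p, b - c⟫ = ⟪q - p, b - p⟫ - ‖q - p‖ ^ 2 + ⟪q - p, q - c⟫ := by
    rw [← real_inner_self_eq_norm_sq, ← inner_sub_right, ← inner_add_right]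
    congr 1; abel
  have hcs : ⟪q - p, q - c⟫ ≤ ‖q - p‖ * ‖q - c‖ := real_inner_le_norm _ _
  rw [real_inner_smul_left]
  rcases eq_or_ne ‖q - p‖ 0 with h0 | h0
  · simp [h0]
  · calc ‖q - p‖⁻¹ * ⟪q - p, b - c⟫ ≤ ‖q - p‖⁻¹ * (‖q - p‖ * ‖q - c‖) := by
          gcongr; nlinarith [sq_nonneg ‖q - p‖]
      _ = ‖q - c‖ := by field_simp

theorem sub_mem_orthogonal_of_image_eq_singleton {K : Submodule ℝ E}
    [K.HasOrthogonalProjection] {C : Set E} {η : E}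
    (h : (fun v => (K.orthogonalProjectionOnto v : E)) '' C = {η}) {b b' : E} (hb : b ∈ C)
    (hb' : b' ∈ C) : b - b' ∈ Kᗮ := by
  have hη : ∀ v ∈ C, (K.orthogonalProjectionOnto v : E) = η := fun v hv =>
    h.subset (mem_image_of_mem _ hv)
  rw [← K.orthogonalProjectionOnto_eq_zero_iff, map_sub, sub_eq_zero, ← Subtype.coe_inj,
    hη b hb, hη b' hb']

theorem exists_separating_unit_mem_orthogonal [CompleteSpace E] {K : Submodule ℝ E} {C : Set E}
    (hcl : IsClosed C) (hcv : Convex ℝ C) (hC : ∀ b ∈ C, ∀ b' ∈ C, b - b' ∈ Kᗮ) {a w : E}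
    (ha : a ∈ C) (hw : w ∈ Kᗮ) (hq : a + w ∉ C) (c : E) :
    ∃ ψ ∈ Kᗮ, ‖ψ‖ = 1 ∧ ∀ b ∈ C, ⟪ψ, b - c⟫ ≤ ‖a + w - c‖ := by
  obtain ⟨p, hp, hpmin⟩ :=
    exists_norm_eq_iInf_of_complete_convex ⟨a, ha⟩ hcl.isComplete hcv (a + w)
  have hsep := (norm_eq_iInf_iff_real_inner_le_zero hcv hp).1 hpmin
  have hne : a + w - p ≠ 0 := sub_ne_zero.2 fun h => hq (h ▸ hp)
  refine ⟨‖a + w - p‖⁻¹ • (a + w - p), Submodule.smul_mem _ _ ?_, norm_smul_inv_norm hne,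
    fun b hb => inner_normalize_sub_le (hsep b hb)⟩
  rw [add_sub_right_comm]
  exact add_mem (hC a ha p hp) hw

theorem mem_locz {A : E → Set E} {xbar ubar x u : E} {ε : ℝ} :
    u ∈ Locz A xbar ubar ε x ↔ ‖x - xbar‖ < ε ∧ u ∈ A x ∧ ‖u - ubar‖ < ε := by
  unfold Locz
  split_ifs with h <;> simp [h]

theorem ContinuousAlongNear.lowerSCAlongAt {A : E → Set E} {S : Set E} {x : E}
    (h : ContinuousAlongNear A S x) (hx : x ∈ S) : LowerSCAlongAt A S x :=
  let ⟨_, hW, hlsc⟩ := h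
  hlsc x ⟨hx, mem_of_mem_nhds hW⟩

end InnerProductSpace

namespace CpPatch

variable {p : ℕ∞} {F : Type*} [NormedAddCommGroup F] [InnerProductSpace ℝ F]
  {E : Type*} [NormedAddCommGroup E] [InnerProductSpace ℝ E] {M : Set E} {xbar : E}

theorem apply_mem (P : CpPatch p F M xbar) {t : F} (ht : t ∈ P.V) : P.toFun t ∈ M :=
  P.image_eq.symm.subset (mem_image_of_mem _ ht)

theorem base_mem (P : CpPatch p F M xbar) : xbar ∈ M :=
  P.map_zero ▸ P.apply_mem P.zero_mem

variable (P : CpPatch p F M xbar)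

theorem tendsto_toFun {ι : Type*} {l : Filter ι} {ts : ι → F} (hts : Tendsto ts l (𝓝 0)) :
    Tendsto (fun k => P.toFun (ts k)) l (𝓝 xbar) := by
  simpa only [P.map_zero, Function.comp_def] using
    (P.contDiffOn.continuousOn.continuousAt (P.isOpen_V.mem_nhds P.zero_mem)).tendsto.comp hts

theorem tangent_apply {t : F} (ht : t ∈ P.V) :
    P.tangent (P.toFun t) = LinearMap.range (fderiv ℝ P.toFun t : F →ₗ[ℝ] E) := by
  have hinv : Function.invFunOn P.toFun P.V (P.toFun t) = t :=
    P.injOn (Function.invFunOn_mem ⟨t, ht, rfl⟩) ht (Function.invFunOn_eq ⟨t, ht, rfl⟩)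
  simp only [tangent, hinv]

theorem mem_normal_apply_iff {t : F} (ht : t ∈ P.V) {v : E} :
    v ∈ P.normal (P.toFun t) ↔ ∀ s : F, ⟪fderiv ℝ P.toFun t s, v⟫ = 0 := by
  simp only [normal, P.tangent_apply ht, Submodule.mem_orthogonal, LinearMap.mem_range,
    forall_exists_index, forall_apply_eq_imp_iff, ContinuousLinearMap.coe_coe]

variable {P}

theorem hasFDerivAt (hp : 1 ≤ p) {t : F} (ht : t ∈ P.V) :
    HasFDerivAt P.toFun (fderiv ℝ P.toFun t) t :=
  ((P.contDiffOn.contDiffAt (P.isOpen_V.mem_nhds ht)).differentiableAt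
    (by exact_mod_cast (one_ne_zero.bot_lt.trans_le hp).ne')).hasFDerivAt

theorem sub_mem_normal_of_isLocalMin (hp : 1 ≤ p) {x : E} {t : F} (ht : t ∈ P.V)
    (hmin : IsLocalMin (fun s => ‖x - P.toFun s‖ ^ 2) t) :
    x - P.toFun t ∈ P.normal (P.toFun t) := by
  have hderiv := ((hasFDerivAt_const x t).sub (hasFDerivAt hp ht)).norm_sq
  have hzero := hmin.hasFDerivAt_eq_zero hderiv
  refine (P.mem_normal_apply_iff ht).2 fun s => ?_
  have hs : ⟪P.toFun t, fderiv ℝ P.toFun t s⟫ - ⟪x, fderiv ℝ P.toFun t s⟫ = 0 := by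
    simpa using congrArg (fun L : F →L[ℝ] ℝ => L s) hzero
  rw [real_inner_comm, inner_sub_left]
  linarith

theorem mem_normal_of_tendsto (hp : 1 ≤ p) {t : F} (ht : t ∈ P.V) {ts : ℕ → F}
    (hts : Tendsto ts atTop (𝓝 t)) (htsV : ∀ k, ts k ∈ P.V) {ψ : ℕ → E} {ψ₀ : E}
    (hψ : Tendsto ψ atTop (𝓝 ψ₀)) (hψN : ∀ k, ψ k ∈ P.normal (P.toFun (ts k))) :
    ψ₀ ∈ P.normal (P.toFun t) := by
  refine (P.mem_normal_apply_iff ht).2 fun s => ?_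
  have hD : Tendsto (fun k => fderiv ℝ P.toFun (ts k)) atTop (𝓝 (fderiv ℝ P.toFun t)) :=
    ((P.contDiffOn.continuousOn_fderiv_of_isOpen P.isOpen_V (by exact_mod_cast hp)).continuousAt
      (P.isOpen_V.mem_nhds ht)).tendsto.comp hts
  have hlim :=
    (((ContinuousLinearMap.apply ℝ E s).continuous.tendsto _).comp hD).inner (𝕜 := ℝ) hψ
  exact tendsto_nhds_unique hlim
    (tendsto_const_nhds.congr fun k => ((P.mem_normal_apply_iff (htsV k)).1 (hψN k) s).symm)

theorem exists_tendsto_sub_mem_normal [FiniteDimensional ℝ F] (hp : 1 ≤ p) {xs : ℕ → E}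
    (hxs : Tendsto xs atTop (𝓝 xbar)) :
    ∃ ts : ℕ → F, Tendsto ts atTop (𝓝 0) ∧ (∀ k, ts k ∈ P.V) ∧
      (∀ k, ‖xs k - P.toFun (ts k)‖ ≤ ‖xs k - xbar‖) ∧
      ∀ᶠ k in atTop, xs k - P.toFun (ts k) ∈ P.normal (P.toFun (ts k)) := by
  obtain ⟨ρ, hρ, hBV⟩ := Metric.nhds_basis_closedBall.mem_iff.1 (P.isOpen_V.mem_nhds P.zero_mem)
  have hB : IsCompact (Metric.closedBall (0 : F) ρ) := isCompact_closedBall 0 ρ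
  have h0B : (0 : F) ∈ Metric.closedBall 0 ρ := Metric.mem_closedBall_self hρ.le
  have hφ : ContinuousOn P.toFun (Metric.closedBall 0 ρ) := P.contDiffOn.continuousOn.mono hBV
  have hmin : ∀ k, ∃ t ∈ Metric.closedBall (0 : F) ρ,
      IsMinOn (fun s => ‖xs k - P.toFun s‖ ^ 2) (Metric.closedBall 0 ρ) t := fun k =>
    hB.exists_isMinOn ⟨0, h0B⟩ ((continuousOn_const.sub hφ).norm.pow 2)
  choose ts htsB htsmin using hmin
  have hle : ∀ k, ‖xs k - P.toFun (ts k)‖ ≤ ‖xs k - xbar‖ := fun k => by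
    have h : ‖xs k - P.toFun (ts k)‖ ^ 2 ≤ ‖xs k - xbar‖ ^ 2 := by
      simpa [P.map_zero] using htsmin k h0B
    exact (pow_le_pow_iff_left₀ (norm_nonneg _) (norm_nonneg _) two_ne_zero).1 h
  have hts : Tendsto ts atTop (𝓝 0) := by
    refine hB.tendsto_of_tendsto_comp_of_injOn hφ (P.injOn.mono hBV) htsB h0B ?_
    rw [P.map_zero, tendsto_iff_norm_sub_tendsto_zero]
    refine squeeze_zero (fun k => norm_nonneg _) (fun k => ?_)
      (by simpa using (tendsto_iff_norm_sub_tendsto_zero.1 hxs).const_mul 2)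
    linarith [hle k, norm_sub_rev (xs k) (P.toFun (ts k)),
      norm_sub_le_norm_sub_add_norm_sub (P.toFun (ts k)) (xs k) xbar]
  refine ⟨ts, hts, fun k => hBV (htsB k), hle, ?_⟩
  filter_upwards [hts.eventually (Metric.ball_mem_nhds 0 hρ)] with k hk
  exact sub_mem_normal_of_isLocalMin hp (hBV (htsB k))
    ((htsmin k).isLocalMin (Metric.closedBall_mem_nhds_of_mem hk))

end CpPatch

namespace PartlySmoothAt

variable {p : ℕ∞} {F : Type*} [NormedAddCommGroup F] [InnerProductSpace ℝ F]
  {E : Type*} [NormedAddCommGroup E] [InnerProductSpace ℝ E] [FiniteDimensional ℝ E]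
  {A : E → Set E} {M : Set E} {xbar ubar : E} {P : CpPatch p F M xbar} {ρ δ : ℝ}

theorem le_of_forall_inner_le_of_mem_normal (hp : 1 ≤ p) (hA : PartlySmoothAt A M xbar P)
    (hρ : 0 ≤ ρ)
    (hball : ∀ v, v - ubar ∈ Lin (A xbar) → ‖v - ubar‖ ≤ ρ → v ∈ A xbar)
    {ts : ℕ → F} (hts : Tendsto ts atTop (𝓝 0)) (htsV : ∀ k, ts k ∈ P.V) {ψ : ℕ → E}
    (hψN : ∀ k, ψ k ∈ P.normal (P.toFun (ts k))) (hψ1 : ∀ k, ‖ψ k‖ = 1) {e : ℕ → ℝ}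
    (he : Tendsto e atTop (𝓝 δ))
    (hsep : ∀ k, ∀ b ∈ A (P.toFun (ts k)), ⟪ψ k, b - ubar⟫ ≤ e k) : ρ ≤ δ := by
  obtain ⟨-, -, hsharp, -, hcont⟩ := hA
  obtain ⟨ψ₀, hψ₀1, τ, hτ, hψτ⟩ := (isCompact_sphere (0 : E) 1).tendsto_subseq
    fun k => mem_sphere_zero_iff_norm.2 (hψ1 k)
  rw [mem_sphere_zero_iff_norm] at hψ₀1
  have htsτ : Tendsto (fun j => ts (τ j)) atTop (𝓝 0) := hts.comp hτ.tendsto_atTop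
  have hψ₀N : ψ₀ ∈ P.normal xbar := by
    simpa only [P.map_zero] using
      CpPatch.mem_normal_of_tendsto hp P.zero_mem htsτ (fun j => htsV _) hψτ fun j => hψN _
  have hvA : ubar + ρ • ψ₀ ∈ A xbar := by
    refine hball _ ?_ ?_ <;> rw [add_sub_cancel_left]
    · exact hsharp ▸ Submodule.smul_mem _ ρ hψ₀N
    · rw [norm_smul, hψ₀1, Real.norm_of_nonneg hρ, mul_one]
  obtain ⟨bs, hbsA, hbs⟩ := hcont.lowerSCAlongAt P.base_mem _ hvA _
    (fun j => P.apply_mem (htsV (τ j))) (P.tendsto_toFun htsτ)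
  have hlim : Tendsto (fun j => ⟪ψ (τ j), bs j - ubar⟫) atTop (𝓝 ρ) := by
    simpa [real_inner_smul_right, real_inner_self_eq_norm_sq, hψ₀1] using
      hψτ.inner (𝕜 := ℝ) (hbs.sub_const ubar)
  exact le_of_tendsto_of_tendsto' hlim (he.comp hτ.tendsto_atTop) fun j => hsep _ _ (hbsA j)

theorem eventually_add_mem (hp : 1 ≤ p) (hA : PartlySmoothAt A M xbar P) (hρ : 0 ≤ ρ)
    (hball : ∀ v, v - ubar ∈ Lin (A xbar) → ‖v - ubar‖ ≤ ρ → v ∈ A xbar) (hδρ : δ < ρ)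
    {ts : ℕ → F} (hts : Tendsto ts atTop (𝓝 0)) (htsV : ∀ k, ts k ∈ P.V) {as ws : ℕ → E}
    (has : ∀ k, as k ∈ A (P.toFun (ts k))) (has' : Tendsto as atTop (𝓝 ubar))
    (hws : ∀ᶠ k in atTop, ws k ∈ P.normal (P.toFun (ts k)) ∧ ‖ws k‖ ≤ δ) :
    ∀ᶠ k in atTop, as k + ws k ∈ A (P.toFun (ts k)) := by
  obtain ⟨Wr, hWr, hreg⟩ := hA.2.1
  obtain ⟨η, Wη, hWη, -, hη⟩ := hA.2.2.2.1
  by_contra hcon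
  obtain ⟨σ, hσ, hbad⟩ := extraction_of_frequently_atTop <|
    (not_eventually.1 hcon).and_eventually
      (hws.and ((P.tendsto_toFun hts).eventually (inter_mem hWr hWη)))
  have hsep : ∀ j, ∃ ψ ∈ P.normal (P.toFun (ts (σ j))), ‖ψ‖ = 1 ∧
      ∀ b ∈ A (P.toFun (ts (σ j))), ⟪ψ, b - ubar⟫ ≤ ‖as (σ j) - ubar‖ + δ := by
    intro j
    obtain ⟨hnot, ⟨hwN, hwδ⟩, hyr, hyη⟩ := hbad j
    obtain ⟨-, hcl, hcv⟩ := hreg _ hyr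
    obtain ⟨ψ, hψN, hψ1, hψ⟩ := exists_separating_unit_mem_orthogonal hcl hcv
      (fun b hb b' hb' => sub_mem_orthogonal_of_image_eq_singleton
        (hη _ ⟨P.apply_mem (htsV _), hyη⟩) hb hb') (has _) hwN hnot ubar
    refine ⟨ψ, hψN, hψ1, fun b hb => (hψ b hb).trans ?_⟩
    rw [add_sub_right_comm]
    exact (norm_add_le _ _).trans (by linarith)
  choose ψ hψN hψ1 hψ using hsep
  have he : Tendsto (fun j => ‖as (σ j) - ubar‖ + δ) atTop (𝓝 δ) := by
    simpa using ((tendsto_iff_norm_sub_tendsto_zero.1 has').comp hσ.tendsto_atTop).add_const δ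
  exact hδρ.not_ge (hA.le_of_forall_inner_le_of_mem_normal hp hρ hball
    (hts.comp hσ.tendsto_atTop) (fun j => htsV _) hψN hψ1 he hψ)

theorem exists_mem_of_tendsto [FiniteDimensional ℝ F] (hp : 1 ≤ p)
    (hA : PartlySmoothAt A M xbar P) (hri : ubar ∈ intrinsicInterior ℝ (A xbar)) {r ε₀ : ℝ}
    (hε₀ : 0 < ε₀) (hmono : ∀ x y u v, u ∈ Locz A xbar ubar ε₀ x → v ∈ Locz A xbar ubar ε₀ y →
      ⟪x - y, u - v⟫ ≥ -r * ‖x - y‖ ^ 2)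
    {xs us : ℕ → E} (hxs : Tendsto xs atTop (𝓝 xbar)) (hus : Tendsto us atTop (𝓝 ubar))
    (husA : ∀ k, us k ∈ A (xs k)) : ∃ k, xs k ∈ M := by
  by_contra! hxsM
  obtain ⟨ts, hts, htsV, hle, hnormal⟩ := CpPatch.exists_tendsto_sub_mem_normal (P := P) hp hxs
  set ys := fun k => P.toFun (ts k)
  have hys : Tendsto ys atTop (𝓝 xbar) := P.tendsto_toFun hts
  have hxy : ∀ k, xs k ≠ ys k := fun k h => hxsM k (h ▸ P.apply_mem (htsV k))
  have hxy0 : Tendsto (fun k => ‖xs k - ys k‖) atTop (𝓝 0) :=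
    squeeze_zero (fun k => norm_nonneg _) hle (tendsto_iff_norm_sub_tendsto_zero.1 hxs)
  obtain ⟨ρ, hρ, hball⟩ := exists_forall_mem_of_mem_intrinsicInterior hri
  obtain ⟨δ, hδ, hδρ, hδε⟩ : ∃ δ, 0 < δ ∧ δ < ρ ∧ δ < ε₀ :=
    ⟨min ρ ε₀ / 2, by positivity, by linarith [min_le_left ρ ε₀], by linarith [min_le_right ρ ε₀]⟩
  obtain ⟨as, hasA, has⟩ := hA.2.2.2.2.lowerSCAlongAt P.base_mem ubar
    (intrinsicInterior_subset hri) ys (fun k => P.apply_mem (htsV k)) hys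
  set ws := fun k => (δ / ‖xs k - ys k‖) • (xs k - ys k)
  have hws : ∀ᶠ k in atTop, ws k ∈ P.normal (ys k) ∧ ‖ws k‖ ≤ δ := by
    filter_upwards [hnormal] with k hk
    refine ⟨Submodule.smul_mem _ _ hk, le_of_eq ?_⟩
    rw [norm_smul, Real.norm_of_nonneg (by positivity),
      div_mul_cancel₀ _ (norm_ne_zero_iff.2 (sub_ne_zero.2 (hxy k)))]
  have hkey : ∀ᶠ k in atTop, δ ≤ ‖us k - as k‖ + r * ‖xs k - ys k‖ := by
    filter_upwards [hA.eventually_add_mem hp hρ.le hball hδρ hts htsV hasA has hws, hws,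
      hxs.eventually (Metric.ball_mem_nhds _ hε₀), hus.eventually (Metric.ball_mem_nhds _ hε₀),
      hys.eventually (Metric.ball_mem_nhds _ hε₀),
      has.eventually (Metric.ball_mem_nhds _ (sub_pos.2 hδε))] with k hqA hwδ hx hu hy ha
    simp only [dist_eq_norm] at hx hu hy ha
    refine le_norm_sub_add_of_inner_ge (hxy k) (hmono _ _ _ _ (mem_locz.2 ⟨hx, husA k, hu⟩)
      (mem_locz.2 ⟨hy, hqA, ?_⟩))
    rw [add_sub_right_comm]
    exact (norm_add_le _ _).trans_lt (by linarith [hwδ.2])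
  have hlim : Tendsto (fun k => ‖us k - as k‖ + r * ‖xs k - ys k‖) atTop (𝓝 0) := by
    simpa using (hus.sub has).norm.add (hxy0.const_mul r)
  exact hδ.not_ge (ge_of_tendsto hlim hkey)

theorem eventually_fst_mem_of_snd_mem [FiniteDimensional ℝ F] (hp : 1 ≤ p)
    (hA : PartlySmoothAt A M xbar P) (hri : ubar ∈ intrinsicInterior ℝ (A xbar)) {r ε₀ : ℝ}
    (hε₀ : 0 < ε₀) (hmono : ∀ x y u v, u ∈ Locz A xbar ubar ε₀ x → v ∈ Locz A xbar ubar ε₀ y →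
      ⟪x - y, u - v⟫ ≥ -r * ‖x - y‖ ^ 2) :
    ∀ᶠ xu in 𝓝 (xbar, ubar), xu.2 ∈ A xu.1 → xu.1 ∈ M := by
  by_contra hcon
  obtain ⟨s, hs, hbad⟩ := frequently_iff_seq_forall.1 (not_eventually.1 hcon)
  simp only [Classical.not_imp] at hbad
  obtain ⟨k, hk⟩ := hA.exists_mem_of_tendsto hp hri hε₀ hmono
    ((continuous_fst.tendsto _).comp hs) ((continuous_snd.tendsto _).comp hs) fun k => (hbad k).1
  exact (hbad k).2 hk

end PartlySmoothAt

theorem mem_interior_localUnion_general {n d : ℕ} {p : ℕ∞} (hp : 1 ≤ p)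
    (A : EuclideanSpace ℝ (Fin n) → Set (EuclideanSpace ℝ (Fin n))) (M : Set (EuclideanSpace ℝ (Fin n))) (xbar ubar : EuclideanSpace ℝ (Fin n))
    (P : CpPatch p (EuclideanSpace ℝ (Fin d)) M xbar)
    (hA : PartlySmoothAt A M xbar P)
    (r ε₀ : ℝ)
    (hreg : ResolventRegular A xbar ubar r ε₀)
    (hri : ubar ∈ intrinsicInterior ℝ (A xbar)) :
    ∀ γ : ℝ, 0 < γ → γ < 1 / r → ∃ εbar > 0, ∀ ε : ℝ, 0 < ε → ε < εbar →
      xbar + γ • ubar ∈ interior (LocalUnion A M xbar ubar γ ε) := by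
  obtain ⟨-, hε₀, hmono, hres⟩ := hreg
  intro γ hγ hγr
  obtain ⟨W, hW, J, hJc, hJ⟩ := hres γ hγ hγr
  have hJz : J (xbar + γ • ubar) = xbar := Eq.symm <| (hJ _ (mem_of_mem_nhds hW) xbar).1
    ⟨ubar, mem_locz.2 (by simp [hε₀, intrinsicInterior_subset hri]), rfl⟩
  refine ⟨ε₀, hε₀, fun ε hε _ => mem_interior_iff_mem_nhds.2 ?_⟩
  have hpair :
      Tendsto (fun z => (J z, γ⁻¹ • (z - J z))) (𝓝 (xbar + γ • ubar)) (𝓝 (xbar, ubar)) := by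
    have hJt : Tendsto J (𝓝 (xbar + γ • ubar)) (𝓝 xbar) := by
      simpa only [hJz] using (hJc.continuousAt hW).tendsto
    simpa [inv_smul_smul₀ hγ.ne'] using hJt.prodMk_nhds ((tendsto_id.sub hJt).const_smul γ⁻¹)
  filter_upwards [hW, hpair.eventually (hA.eventually_fst_mem_of_snd_mem hp hri hε₀ hmono),
    hpair.eventually (prod_mem_nhds (Metric.ball_mem_nhds xbar hε) (Metric.ball_mem_nhds ubar hε))]
    with z hzW hzM hzε
  obtain ⟨u, hu, hz⟩ := (hJ z hzW (J z)).2 rfl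
  have hu' : γ⁻¹ • (z - J z) = u := by rw [sub_eq_of_eq_add' hz, inv_smul_smul₀ hγ.ne']
  rw [hu'] at hzM hzε
  obtain ⟨hxε, huε⟩ := hzε
  rw [Metric.mem_ball, dist_eq_norm] at hxε huε
  obtain ⟨-, huA, -⟩ := mem_locz.1 hu
  exact ⟨J z, hzM huA, hxε, u, mem_locz.2 ⟨hxε, huA, huε⟩, hz⟩

/-- under non-degeneracy, `x̄ + γū` is interior to the local union. -/
theorem mem_interior_localUnion {n d : ℕ} {p : ℕ∞} (hp : 1 ≤ p)
    (A : EuclideanSpace ℝ (Fin n) → Set (EuclideanSpace ℝ (Fin n))) (M : Set (EuclideanSpace ℝ (Fin n))) (xbar ubar : EuclideanSpace ℝ (Fin n))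
    (P : CpPatch p (EuclideanSpace ℝ (Fin d)) M xbar)
    (hA : PartlySmoothAt A M xbar P)
    (hubar : ubar ∈ A xbar) (r ε₀ : ℝ)
    (hreg : ResolventRegular A xbar ubar r ε₀)
    (hri : ubar ∈ intrinsicInterior ℝ (A xbar)) :
    ∀ γ : ℝ, 0 < γ → γ < 1 / r → ∃ εbar > 0, ∀ ε : ℝ, 0 < ε → ε < εbar →
      xbar + γ • ubar ∈ interior (LocalUnion A M xbar ubar γ ε) :=
  mem_interior_localUnion_general hp A M xbar ubar P hA r ε₀ hreg hri
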